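/- arXiv:1301.1711 — 7 statements merged into one kernel-verified Lean document; each statement's English description precedes it below -/
import Mathlib

section
/- Let $\{v_k\}$ be a sequence of nonnegative random variables with $E[v_0] < \infty$, and let $\{\alpha_k\}$, $\{\mu_k\}$ be deterministic scalar sequences with $0 \le \alpha_k \le 1$, $\mu_k \ge 0$, $E[v_{k+1} \mid v_0,\ldots,v_k] \le (1-\alpha_k) v_k + \mu_k$ almost surely, $\sum_k \alpha_k = \infty$, $\sum_k \mu_k < \infty$, and $\mu_k/\alpha_k \to 0$. Then $v_k \to 0$ almost surely and $E[v_k] \to 0$. -/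
/-!
Taking expectations in the recursion gives `e (k+1) ≤ (1 - α k) * e k + μ k` for `e k = 𝔼[v k]`;
iterating it, the initial value is damped by `∏ (1 - α j) ≤ exp (-∑ α j) → 0` and the inputs add
up to at most a tail of `∑ μ`, so `e k → 0`. Dropping the contraction factor, `v k + ∑_{j ≥ k} μ j`
is a nonnegative supermartingale, hence converges almost surely, and so does `v k`. Since
`𝔼[v k] → 0`, some subsequence of `v k` tends to `0` almost surely, so that limit is `0`.
-/

open MeasureTheory Filter Finset Topology

section Deterministic

variable {e α b : ℕ → ℝ}

lemma tendsto_prod_Ico_one_sub_of_not_summable (hα0 : ∀ k, 0 ≤ α k) (hα1 : ∀ k, α k ≤ 1)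
    (hα : ¬ Summable α) (m : ℕ) :
    Tendsto (fun n => ∏ j ∈ Ico m n, (1 - α j)) atTop (𝓝 0) := by
  have hsum : Tendsto (fun n => ∑ j ∈ Ico m n, α j) atTop atTop := by
    refine (tendsto_atTop_add_const_right _ (-∑ j ∈ range m, α j)
      ((not_summable_iff_tendsto_nat_atTop_of_nonneg hα0).1 hα)).congr' ?_
    filter_upwards [eventually_ge_atTop m] with n hn
    rw [sum_Ico_eq_sub _ hn, sub_eq_add_neg]
  refine tendsto_of_tendsto_of_tendsto_of_le_of_le tendsto_const_nhds
    (Real.tendsto_exp_atBot.comp (tendsto_neg_atTop_atBot.comp hsum))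
    (fun n => prod_nonneg fun j _ => sub_nonneg.2 (hα1 j)) fun n => ?_
  calc ∏ j ∈ Ico m n, (1 - α j) ≤ ∏ j ∈ Ico m n, Real.exp (-α j) :=
        prod_le_prod (fun j _ => sub_nonneg.2 (hα1 j)) fun j _ => Real.one_sub_le_exp_neg _
    _ = Real.exp (-∑ j ∈ Ico m n, α j) := by rw [← sum_neg_distrib, Real.exp_sum]

lemma sum_Ico_le_tsum_nat_add (hb0 : ∀ k, 0 ≤ b k) (hb : Summable b) (m n : ℕ) :
    ∑ j ∈ Ico m n, b j ≤ ∑' k, b (k + m) := by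
  rw [sum_Ico_eq_sum_range]
  simp_rw [add_comm m]
  exact ((summable_nat_add_iff m).2 hb).sum_le_tsum _ fun k _ => hb0 _

theorem tendsto_zero_of_le_one_sub_mul_add (he : ∀ k, 0 ≤ e k) (hα0 : ∀ k, 0 ≤ α k)
    (hα1 : ∀ k, α k ≤ 1) (hb0 : ∀ k, 0 ≤ b k) (hα : ¬ Summable α) (hb : Summable b)
    (hrec : ∀ k, e (k + 1) ≤ (1 - α k) * e k + b k) :
    Tendsto e atTop (𝓝 0) := by
  have hiter : ∀ m n, m ≤ n → e n ≤ e m * ∏ j ∈ Ico m n, (1 - α j) + ∑' k, b (k + m) := by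
    intro m n hmn
    calc e n ≤ e m * ∏ j ∈ Ico m n, (1 - α j) +
          ∑ k ∈ Ico m n, b k * ∏ j ∈ Ico (k + 1) n, (1 - α j) :=
          discrete_gronwall_prod_general (fun k _ => hrec k) (fun k _ => sub_nonneg.2 (hα1 k)) hmn
      _ ≤ e m * ∏ j ∈ Ico m n, (1 - α j) + ∑ k ∈ Ico m n, b k := by
          gcongr with k
          exact mul_le_of_le_one_right (hb0 k) (prod_le_one (fun j _ => sub_nonneg.2 (hα1 j))
            fun j _ => sub_le_self _ (hα0 j))
      _ ≤ e m * ∏ j ∈ Ico m n, (1 - α j) + ∑' k, b (k + m) := by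
          gcongr; exact sum_Ico_le_tsum_nat_add hb0 hb m n
  refine tendsto_order.2 ⟨fun a ha => .of_forall fun n => ha.trans_le (he n), fun a ha => ?_⟩
  obtain ⟨m, hm⟩ := ((tendsto_order.1 (tendsto_sum_nat_add b)).2 (a / 2) (half_pos ha)).exists
  have hprod : ∀ᶠ n in atTop, e m * ∏ j ∈ Ico m n, (1 - α j) < a / 2 := by
    refine (tendsto_order.1 ?_).2 _ (half_pos ha)
    simpa using (tendsto_prod_Ico_one_sub_of_not_summable hα0 hα1 hα m).const_mul (e m)
  filter_upwards [hprod, eventually_ge_atTop m] with n hn hmn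
  linarith [hiter m n hmn]

end Deterministic

namespace MeasureTheory

variable {Ω : Type*} {m0 : MeasurableSpace Ω} {μ : Measure Ω}

lemma eLpNorm_one_eq_ofReal_integral {f : Ω → ℝ} (hf : Integrable f μ) (hnn : 0 ≤ᵐ[μ] f) :
    eLpNorm f 1 μ = ENNReal.ofReal (∫ ω, f ω ∂μ) := by
  rw [eLpNorm_one_eq_lintegral_enorm, ofReal_integral_eq_lintegral_ofReal hf hnn]
  refine lintegral_congr_ae ?_
  filter_upwards [hnn] with ω hω
  exact Real.enorm_of_nonneg hω

lemma Supermartingale.exists_ae_tendsto_of_nonneg [IsFiniteMeasure μ] {ℱ : Filtration ℕ m0}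
    {f : ℕ → Ω → ℝ} (hf : Supermartingale f ℱ μ) (hnn : ∀ n, 0 ≤ᵐ[μ] f n) :
    ∀ᵐ ω ∂μ, ∃ c, Tendsto (fun n => f n ω) atTop (𝓝 c) := by
  have hbdd : ∀ n, eLpNorm ((-f) n) 1 μ ≤ (∫ ω, f 0 ω ∂μ).toNNReal := by
    intro n
    rw [Pi.neg_apply, eLpNorm_neg, eLpNorm_one_eq_ofReal_integral (hf.integrable n) (hnn n)]
    exact ENNReal.ofReal_le_ofReal
      (by simpa using hf.setIntegral_le (Nat.zero_le n) MeasurableSet.univ)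
  filter_upwards [hf.neg.exists_ae_tendsto_of_bdd hbdd] with ω ⟨c, hc⟩
  exact ⟨-c, by simpa using hc.neg⟩

lemma ae_tendsto_zero_of_tendsto_integral_zero {f : ℕ → Ω → ℝ} (hint : ∀ n, Integrable (f n) μ)
    (hnn : ∀ n, 0 ≤ᵐ[μ] f n) (hconv : ∀ᵐ ω ∂μ, ∃ c, Tendsto (fun n => f n ω) atTop (𝓝 c))
    (hL1 : Tendsto (fun n => ∫ ω, f n ω ∂μ) atTop (𝓝 0)) :
    ∀ᵐ ω ∂μ, Tendsto (fun n => f n ω) atTop (𝓝 0) := by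
  have hmeas : TendstoInMeasure μ f atTop 0 := by
    refine tendstoInMeasure_of_tendsto_eLpNorm one_ne_zero
      (fun n => (hint n).aestronglyMeasurable) aestronglyMeasurable_zero ?_
    simp_rw [sub_zero, eLpNorm_one_eq_ofReal_integral (hint _) (hnn _)]
    simpa using ENNReal.tendsto_ofReal hL1
  obtain ⟨ns, hns, hsub⟩ := hmeas.exists_seq_tendsto_ae
  filter_upwards [hconv, hsub] with ω ⟨c, hc⟩ hω
  rwa [tendsto_nhds_unique (hc.comp hns.tendsto_atTop) hω] at hc

variable {ℱ : Filtration ℕ m0} {v : ℕ → Ω → ℝ} {α b : ℕ → ℝ}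

lemma integral_succ_le_of_condExp_le [IsProbabilityMeasure μ] {k : ℕ}
    (hint : Integrable (v k) μ)
    (hrec : μ[v (k + 1) | ℱ k] ≤ᵐ[μ] fun ω => (1 - α k) * v k ω + b k) :
    ∫ ω, v (k + 1) ω ∂μ ≤ (1 - α k) * ∫ ω, v k ω ∂μ + b k := by
  rw [← integral_condExp (ℱ.le k)]
  refine (integral_mono_ae integrable_condExp
    ((hint.const_mul _).add (integrable_const _)) hrec).trans_eq ?_
  change ∫ ω, ((1 - α k) * v k ω + b k) ∂μ = _
  rw [integral_add (hint.const_mul _) (integrable_const _), integral_const_mul, integral_const]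
  simp

lemma supermartingale_add_tsum_nat_add [IsFiniteMeasure μ] (hadp : StronglyAdapted ℱ v)
    (hint : ∀ k, Integrable (v k) μ) (hb : Summable b)
    (hstep : ∀ k, μ[v (k + 1) | ℱ k] ≤ᵐ[μ] fun ω => v k ω + b k) :
    Supermartingale (fun k ω => v k ω + ∑' j, b (j + k)) ℱ μ := by
  refine supermartingale_nat (fun k => (hadp k).add stronglyMeasurable_const)
    (fun k => (hint k).add (integrable_const _)) fun k => ?_
  have htail : ∑' j, b (j + k) = b k + ∑' j, b (j + (k + 1)) := by
    rw [((summable_nat_add_iff k).2 hb).tsum_eq_zero_add]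
    simp only [zero_add, add_right_comm _ 1 k, add_assoc]
  have hadd : μ[fun ω => v (k + 1) ω + ∑' j, b (j + (k + 1)) | ℱ k]
      =ᵐ[μ] μ[v (k + 1) | ℱ k] + μ[fun _ => ∑' j, b (j + (k + 1)) | ℱ k] :=
    condExp_add (hint (k + 1)) (integrable_const _) (ℱ k)
  filter_upwards [hadd, hstep k] with ω hadd hω
  rw [hadd, Pi.add_apply, condExp_const (ℱ.le k), htail]
  linarith

theorem tendsto_zero_of_condExp_le_one_sub_mul_add [IsProbabilityMeasure μ]
    (hadp : StronglyAdapted ℱ v) (hint : ∀ k, Integrable (v k) μ) (hnn : ∀ k, 0 ≤ᵐ[μ] v k)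
    (hα0 : ∀ k, 0 ≤ α k) (hα1 : ∀ k, α k ≤ 1) (hb0 : ∀ k, 0 ≤ b k)
    (hrec : ∀ k, μ[v (k + 1) | ℱ k] ≤ᵐ[μ] fun ω => (1 - α k) * v k ω + b k)
    (hα : ¬ Summable α) (hb : Summable b) :
    (∀ᵐ ω ∂μ, Tendsto (fun k => v k ω) atTop (𝓝 0)) ∧
      Tendsto (fun k => ∫ ω, v k ω ∂μ) atTop (𝓝 0) := by
  have hL1 : Tendsto (fun k => ∫ ω, v k ω ∂μ) atTop (𝓝 0) :=
    tendsto_zero_of_le_one_sub_mul_add (fun k => integral_nonneg_of_ae (hnn k)) hα0 hα1 hb0 hα hb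
      fun k => integral_succ_le_of_condExp_le (hint k) (hrec k)
  have hsuper := supermartingale_add_tsum_nat_add hadp hint hb fun k => by
    filter_upwards [hrec k, hnn k] with ω hω hv
    nlinarith [mul_nonneg (hα0 k) hv]
  have hconv : ∀ᵐ ω ∂μ, ∃ c, Tendsto (fun k => v k ω) atTop (𝓝 c) := by
    have hsuper_nn : ∀ k, 0 ≤ᵐ[μ] fun ω => v k ω + ∑' j, b (j + k) := fun k => by
      filter_upwards [hnn k] with ω hω
      exact add_nonneg hω (tsum_nonneg fun j => hb0 _)
    filter_upwards [hsuper.exists_ae_tendsto_of_nonneg hsuper_nn] with ω ⟨c, hc⟩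
    exact ⟨c, by simpa using hc.sub (tendsto_sum_nat_add b)⟩
  exact ⟨ae_tendsto_zero_of_tendsto_integral_zero hint hnn hconv hL1, hL1⟩

lemma Filtration.natural_eq_iSup_range {v : ℕ → Ω → ℝ} (hv : ∀ k, StronglyMeasurable (v k))
    (k : ℕ) :
    Filtration.natural v hv k = ⨆ i ∈ range (k + 1), MeasurableSpace.comap (v i) (borel ℝ) := by
  simp [Filtration.natural, ← BorelSpace.measurable_eq]

end MeasureTheory

theorem stmt_0_general {Ω : Type*} [MeasurableSpace Ω] (μ : Measure Ω) [IsProbabilityMeasure μ]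
    (v : ℕ → Ω → ℝ) (α μseq : ℕ → ℝ)
    (hmeas : ∀ k, Measurable (v k))
    (hint : ∀ k, Integrable (v k) μ)
    (hnonneg : ∀ k, ∀ᵐ ω ∂μ, 0 ≤ v k ω)
    (hα : ∀ k, 0 ≤ α k ∧ α k ≤ 1)
    (hμ : ∀ k, 0 ≤ μseq k)
    (hrec : ∀ k, ∀ᵐ ω ∂μ,
      (μ[v (k+1) | ⨆ i ∈ Finset.range (k+1), MeasurableSpace.comap (v i) (borel ℝ)]) ω
        ≤ (1 - α k) * v k ω + μseq k)
    (hαsum : ¬ Summable α)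
    (hμsum : Summable μseq) :
    (∀ᵐ ω ∂μ, Tendsto (fun k => v k ω) atTop (nhds 0)) ∧
      Tendsto (fun k => ∫ ω, v k ω ∂μ) atTop (nhds 0) := by
  have hv : ∀ k, StronglyMeasurable (v k) := fun k => (hmeas k).stronglyMeasurable
  refine tendsto_zero_of_condExp_le_one_sub_mul_add (Filtration.stronglyAdapted_natural hv) hint
    hnonneg (fun k => (hα k).1) (fun k => (hα k).2) hμ (fun k => ?_) hαsum hμsum
  rw [Filtration.natural_eq_iSup_range]
  exact hrec k

theorem stmt_0 {Ω : Type*} [MeasurableSpace Ω] (μ : Measure Ω) [IsProbabilityMeasure μ]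
    (v : ℕ → Ω → ℝ) (α μseq : ℕ → ℝ)
    (hmeas : ∀ k, Measurable (v k))
    (hint : ∀ k, Integrable (v k) μ)
    (hnonneg : ∀ k, ∀ᵐ ω ∂μ, 0 ≤ v k ω)
    (hα : ∀ k, 0 ≤ α k ∧ α k ≤ 1)
    (hμ : ∀ k, 0 ≤ μseq k)
    (hrec : ∀ k, ∀ᵐ ω ∂μ,
      (μ[v (k+1) | ⨆ i ∈ Finset.range (k+1), MeasurableSpace.comap (v i) (borel ℝ)]) ω
        ≤ (1 - α k) * v k ω + μseq k)
    (hαsum : ¬ Summable α)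
    (hμsum : Summable μseq)
    (hratio : Tendsto (fun k => μseq k / α k) atTop (nhds 0)) :
    (∀ᵐ ω ∂μ, Tendsto (fun k => v k ω) atTop (nhds 0)) ∧
      Tendsto (fun k => ∫ ω, v k ω ∂μ) atTop (nhds 0) :=
  stmt_0_general μ v α μseq hmeas hint hnonneg hα hμ hrec hαsum hμsum
end

section
/- Let $c > 0$ and let $\{\gamma_k\}$ be defined recursively by $\gamma_{k+1} = \gamma_k(1 - c\gamma_k)$ with $0 < \gamma_0 < 1/c$. Then $\sum_{k=0}^{\infty} \gamma_k = \infty$ and $\sum_{k=0}^{\infty} \gamma_k^2 < \infty$. -/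
/-!
The step `x ↦ x (1 - c x)` keeps `γ` positive and decreasing. Since `c γₖ² = γₖ - γₖ₊₁`, the
partial sums of `γₖ²` telescope and are bounded by `γ₀ / c`. On the other side
`1/γₖ₊₁ - 1/γₖ = c / (1 - c γₖ) ≤ c / (1 - c γ₀)`, so `1/γₙ` grows at most linearly and `γₙ`
dominates a multiple of the harmonic series.
-/

open Finset

theorem not_summable_of_inv_sub_inv_le {u : ℕ → ℝ} {B : ℝ} (hpos : ∀ n, 0 < u n)
    (hstep : ∀ n, (u (n + 1))⁻¹ - (u n)⁻¹ ≤ B) : ¬ Summable u := by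
  set M := max (u 0)⁻¹ B
  have hM : 0 < M := lt_max_of_lt_left (inv_pos.mpr (hpos 0))
  have hinv_le : ∀ n : ℕ, (u n)⁻¹ ≤ M * (n + 1) := by
    intro n
    have hlin : (u n)⁻¹ ≤ (u 0)⁻¹ + B * n := by
      induction n with
      | zero => simp
      | succ k ih => push_cast; linarith [hstep k]
    have hn : (0 : ℝ) ≤ n := n.cast_nonneg
    nlinarith [le_max_left (u 0)⁻¹ B, le_max_right (u 0)⁻¹ B]
  have hharmonic_le : ∀ n : ℕ, M⁻¹ * ((n : ℝ) + 1)⁻¹ ≤ u n := fun n => by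
    rw [← mul_inv, ← inv_inv (u n)]
    exact inv_anti₀ (inv_pos.mpr (hpos n)) (hinv_le n)
  intro hu
  have hharmonic : Summable fun n : ℕ => ((n : ℝ) + 1)⁻¹ :=
    (summable_mul_left_iff (inv_ne_zero hM.ne')).mp
      (hu.of_nonneg_of_le (fun n => by positivity) hharmonic_le)
  refine Real.not_summable_natCast_inv ((summable_nat_add_iff 1).mp ?_)
  exact_mod_cast hharmonic

section LogisticRecursion

variable {c : ℝ} {γ : ℕ → ℝ}

theorem logistic_pos_and_le_init (hc : 0 < c) (hrec : ∀ k, γ (k + 1) = γ k * (1 - c * γ k))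
    (h0 : 0 < γ 0) (hc0 : c * γ 0 < 1) (n : ℕ) : 0 < γ n ∧ γ n ≤ γ 0 := by
  induction n with
  | zero => exact ⟨h0, le_rfl⟩
  | succ k ih =>
    obtain ⟨hpos, hle⟩ := ih
    have hck : c * γ k < 1 := by nlinarith
    rw [hrec k]
    exact ⟨by nlinarith, by nlinarith [mul_pos (mul_pos hc hpos) hpos]⟩

theorem logistic_mul_sum_sq (hrec : ∀ k, γ (k + 1) = γ k * (1 - c * γ k)) (n : ℕ) :
    c * ∑ k ∈ range n, γ k ^ 2 = γ 0 - γ n := by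
  have hdrop : ∀ k, c * γ k ^ 2 = γ k - γ (k + 1) := fun k => by rw [hrec k]; ring
  rw [mul_sum, sum_congr rfl fun k _ => hdrop k, sum_range_sub']

theorem logistic_inv_succ_sub_inv (hrec : ∀ k, γ (k + 1) = γ k * (1 - c * γ k)) {k : ℕ}
    (hpos : 0 < γ k) (hck : c * γ k < 1) :
    (γ (k + 1))⁻¹ - (γ k)⁻¹ = c / (1 - c * γ k) := by
  have hne : 1 - c * γ k ≠ 0 := (sub_pos.mpr hck).ne'
  rw [hrec k, inv_sub_inv (mul_ne_zero hpos.ne' hne) hpos.ne']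
  field_simp
  ring

end LogisticRecursion

theorem stmt_4 (c : ℝ) (hc : 0 < c) (γ : ℕ → ℝ)
    (hrec : ∀ k, γ (k+1) = γ k * (1 - c * γ k))
    (h0 : 0 < γ 0) (h0' : γ 0 < 1 / c) :
    ¬ Summable γ ∧ Summable (fun k => (γ k)^2) := by
  have hc0 : c * γ 0 < 1 := by rwa [lt_div_iff₀ hc, mul_comm] at h0'
  have hbounds := logistic_pos_and_le_init hc hrec h0 hc0
  constructor
  · refine not_summable_of_inv_sub_inv_le (B := c / (1 - c * γ 0)) (fun n => (hbounds n).1)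
      fun n => ?_
    obtain ⟨hpos, hle⟩ := hbounds n
    have hcn : c * γ n ≤ c * γ 0 := mul_le_mul_of_nonneg_left hle hc.le
    rw [logistic_inv_succ_sub_inv hrec hpos (hcn.trans_lt hc0)]
    gcongr
  · refine summable_of_sum_range_le (c := γ 0 / c) (fun n => sq_nonneg _) fun n => ?_
    rw [le_div_iff₀ hc, mul_comm, logistic_mul_sum_sq hrec]
    linarith [(hbounds n).1]
end

section
/- Let $e_0 > 0$, $a > 0$, $b > 0$, and define $\delta_0^* = \frac{a}{2b} e_0$, $\delta_k^* = \delta_{k-1}^* (1 - \frac{a}{2} \delta_{k-1}^*)$ for $k \ge 1$, and $e_{k+1}(\delta_0,\ldots,\delta_k) = (1 - a \delta_k) e_k(\delta_0,\ldots,\delta_{k-1}) + b \delta_k^2$. Then $e_k(\delta_0^*, \ldots, \delta_{k-1}^*) = \frac{2b}{a} \delta_k^*$ for all $k \ge 0$. -/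
lemma error_update_eq_two_mul_div_mul_stepsize_update {K : Type*} [Field K] [NeZero (2 : K)]
    {a b d : K} (ha : a ≠ 0) :
    (1 - a * d) * (2 * b / a * d) + b * d ^ 2 = 2 * b / a * (d * (1 - a / 2 * d)) := by
  field_simp
  ring

theorem stmt_6_general (a b e0 : ℝ) (ha : 0 < a) (hb : 0 < b)
    (δ : ℕ → ℝ) (hδ0 : δ 0 = a / (2 * b) * e0)
    (hδ : ∀ k, δ (k+1) = δ k * (1 - a / 2 * δ k))
    (e : ℕ → ℝ) (he : e 0 = e0)
    (herec : ∀ k, e (k+1) = (1 - a * δ k) * e k + b * (δ k)^2) :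
    ∀ k, e k = (2 * b / a) * δ k := by
  intro k
  induction k with
  | zero =>
    rw [he, hδ0]
    field_simp
  | succ k ih =>
    rw [herec, ih, hδ, error_update_eq_two_mul_div_mul_stepsize_update ha.ne']

theorem stmt_6 (a b e0 : ℝ) (ha : 0 < a) (hb : 0 < b) (he0 : 0 < e0)
    (δ : ℕ → ℝ) (hδ0 : δ 0 = a / (2 * b) * e0)
    (hδ : ∀ k, δ (k+1) = δ k * (1 - a / 2 * δ k))
    (e : ℕ → ℝ) (he : e 0 = e0)
    (herec : ∀ k, e (k+1) = (1 - a * δ k) * e k + b * (δ k)^2) :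
    ∀ k, e k = (2 * b / a) * δ k :=
  stmt_6_general a b e0 ha hb δ hδ0 hδ e he herec
end

section
/- Let $a > 0$, $b > 0$, $e_0 > 0$, and define error functions recursively by $e_{k+1}(\delta_0,\ldots,\delta_k) = (1 - a\delta_k) e_k(\delta_0,\ldots,\delta_{k-1}) + b\delta_k^2$. Let $\delta_0^* = \frac{a}{2b} e_0$ and $\delta_k^* = \delta_{k-1}^*(1 - \frac{a}{2}\delta_{k-1}^*)$. Suppose $U > 0$ is such that $\delta_0^* \le U$ and $U \le 1/a$. Then for every $k \ge 1$ and every $(\delta_0,\ldots,\delta_{k-1})$ with $0 < \delta_j \le U$ for all $j$, we have $e_k(\delta_0,\ldots,\delta_{k-1}) - e_k(\delta_0^*,\ldots,\delta_{k-1}^*) \ge b (\delta_{k-1} - \delta_{k-1}^*)^2$. -/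
/-!
Along the optimal stepsizes the errors satisfy `a * e δs k = 2 * b * δs k`, which turns the
recursion into the exact identity
`e δ (k+1) - e δs (k+1) = (1 - a * δ k) * (e δ k - e δs k) + b * (δ k - δs k) ^ 2`.
Since `a * δ k ≤ a * U ≤ 1`, both terms on the right are nonnegative: induction gives
`e δs k ≤ e δ k`, and the last step of the identity then gives the bound.
-/

section ErrorRecursion

variable {a b : ℝ} {e : (ℕ → ℝ) → ℕ → ℝ}
  (herec : ∀ δ k, e δ (k + 1) = (1 - a * δ k) * e δ k + b * δ k ^ 2)
include herec

theorem mul_error_eq_of_optimal_stepsize {δs : ℕ → ℝ} (h0 : a * e δs 0 = 2 * b * δs 0)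
    (hδs : ∀ k, δs (k + 1) = δs k * (1 - a / 2 * δs k)) (k : ℕ) :
    a * e δs k = 2 * b * δs k := by
  induction k with
  | zero => exact h0
  | succ k ih =>
    rw [herec, hδs k]
    linear_combination (1 - a * δs k) * ih

theorem error_sub_error_succ {δs : ℕ → ℝ} {k : ℕ} (hk : a * e δs k = 2 * b * δs k)
    (δ : ℕ → ℝ) :
    e δ (k + 1) - e δs (k + 1) = (1 - a * δ k) * (e δ k - e δs k) + b * (δ k - δs k) ^ 2 := by
  rw [herec δ, herec δs]
  linear_combination (δs k - δ k) * hk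

theorem error_le_error_of_optimal {δs : ℕ → ℝ} (hb : 0 ≤ b)
    (hopt : ∀ k, a * e δs k = 2 * b * δs k) {δ : ℕ → ℝ} (hδ0 : e δ 0 = e δs 0) :
    ∀ k, (∀ j < k, a * δ j ≤ 1) → e δs k ≤ e δ k := by
  intro k
  induction k with
  | zero => exact fun _ => hδ0.ge
  | succ k ih =>
    intro hδ
    have hprev : 0 ≤ e δ k - e δs k := sub_nonneg.2 (ih fun j hj => hδ j (hj.trans k.lt_succ_self))
    have hstep : 0 ≤ 1 - a * δ k := sub_nonneg.2 (hδ k k.lt_succ_self)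
    have := error_sub_error_succ herec (hopt k) δ
    linarith [mul_nonneg hstep hprev, mul_nonneg hb (sq_nonneg (δ k - δs k))]

end ErrorRecursion

theorem stmt_7_general (a b e0 U : ℝ) (ha : 0 < a) (hb : 0 < b)
    (e : (ℕ → ℝ) → ℕ → ℝ)
    (he0' : ∀ δ, e δ 0 = e0)
    (herec : ∀ δ k, e δ (k+1) = (1 - a * δ k) * e δ k + b * (δ k)^2)
    (δs : ℕ → ℝ) (hδs0 : δs 0 = a / (2 * b) * e0)
    (hδs : ∀ k, δs (k+1) = δs k * (1 - a / 2 * δs k))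
    (hU2 : U ≤ 1 / a) :
    ∀ k ≥ 1, ∀ δ : ℕ → ℝ, (∀ j < k, 0 < δ j ∧ δ j ≤ U) →
      b * (δ (k-1) - δs (k-1))^2 ≤ e δ k - e δs k := by
  have hopt : ∀ k, a * e δs k = 2 * b * δs k :=
    mul_error_eq_of_optimal_stepsize herec (by rw [he0', hδs0]; field_simp) hδs
  rintro k hk δ hδ
  obtain ⟨m, rfl⟩ : ∃ m, k = m + 1 := ⟨k - 1, by omega⟩
  have hstep : ∀ j < m + 1, a * δ j ≤ 1 := fun j hj =>
    (le_div_iff₀' ha).1 ((hδ j hj).2.trans hU2)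
  have hprev : e δs m ≤ e δ m := error_le_error_of_optimal herec hb.le hopt
    (by rw [he0', he0']) m fun j hj => hstep j (hj.trans m.lt_succ_self)
  rw [Nat.add_sub_cancel, error_sub_error_succ herec (hopt m) δ]
  have := mul_nonneg (sub_nonneg.2 (hstep m m.lt_succ_self)) (sub_nonneg.2 hprev)
  linarith

theorem stmt_7 (a b e0 U : ℝ) (ha : 0 < a) (hb : 0 < b) (he0 : 0 < e0) (hU : 0 < U)
    (e : (ℕ → ℝ) → ℕ → ℝ)
    (he0' : ∀ δ, e δ 0 = e0)
    (herec : ∀ δ k, e δ (k+1) = (1 - a * δ k) * e δ k + b * (δ k)^2)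
    (δs : ℕ → ℝ) (hδs0 : δs 0 = a / (2 * b) * e0)
    (hδs : ∀ k, δs (k+1) = δs k * (1 - a / 2 * δs k))
    (hU1 : δs 0 ≤ U) (hU2 : U ≤ 1 / a) :
    ∀ k ≥ 1, ∀ δ : ℕ → ℝ, (∀ j < k, 0 < δ j ∧ δ j ≤ U) →
      b * (δ (k-1) - δs (k-1))^2 ≤ e δ k - e δs k :=
  stmt_7_general a b e0 U ha hb e he0' herec δs hδs0 hδs hU2
end

section
/- Let $f : \mathbb{R}^n \to \mathbb{R}$ be convex and let $z$ be a random vector with an absolutely continuous distribution with respect to Lebesgue measure on $\mathbb{R}^n$ such that $E[f(x - z)] < \infty$ for all $x$. Then the smoothed function $f^\epsilon(x) := E[f(x - z)]$ is differentiable everywhere on $\mathbb{R}^n$. -/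
/-!
A convex function is locally Lipschitz, and on a ball around `c` its Lipschitz constant is
controlled by `|f|` at `c` and at the translates by `c` of the vertices of a fixed simplex
containing a ball around `0`. Hence `x ↦ f (x - z)` is Lipschitz near `x₀` with a constant that is
integrable in `z`, and it is differentiable at `x₀` for `μ`-a.e. `z` by Rademacher's theorem and
absolute continuity of `μ`; differentiation under the integral sign concludes.
-/

open MeasureTheory Metric Set

section Rademacher

variable {E F : Type*} [NormedAddCommGroup E] [NormedSpace ℝ E] [FiniteDimensional ℝ E]
  [NormedAddCommGroup F] [NormedSpace ℝ F] [FiniteDimensional ℝ F]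
  [MeasurableSpace E] [BorelSpace E] {μ : Measure E} [μ.IsAddHaarMeasure]

theorem LocallyLipschitz.ae_differentiableAt {f : E → F} (hf : LocallyLipschitz f) :
    ∀ᵐ x ∂μ, DifferentiableAt ℝ f x := by
  refine measure_null_of_locally_null _ fun x _ => ?_
  obtain ⟨K, t, ht, hK⟩ := hf x
  refine ⟨{y | ¬DifferentiableAt ℝ f y} ∩ interior t,
    inter_mem_nhdsWithin _ (interior_mem_nhds.2 ht), ?_⟩
  have hdiff := (hK.mono interior_subset).ae_differentiableWithinAt_of_mem (μ := μ)
  rw [ae_iff] at hdiff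
  refine measure_mono_null (fun y ⟨hy, hyt⟩ => ?_) hdiff
  exact fun h => hy ((h hyt).differentiableAt (isOpen_interior.mem_nhds hyt))

theorem ConvexOn.ae_differentiableAt {f : E → ℝ} (hf : ConvexOn ℝ univ f) :
    ∀ᵐ x ∂μ, DifferentiableAt ℝ f x :=
  hf.locallyLipschitz.ae_differentiableAt

end Rademacher

section LocalBounds

variable {E : Type*} [NormedAddCommGroup E] [NormedSpace ℝ E] {f : E → ℝ}

theorem exists_ball_subset_convexHull_affineBasis [FiniteDimensional ℝ E] :
    ∃ (b : AffineBasis (Fin (Module.finrank ℝ E + 1)) ℝ E) (ε : ℝ), 0 < ε ∧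
      ball 0 ε ⊆ convexHull ℝ (range b) := by
  obtain ⟨b, hb, -⟩ :=
    exists_mem_interior_convexHull_affineBasis (Filter.univ_mem (f := nhds (0 : E)))
  obtain ⟨ε, hε, hball⟩ := Metric.mem_nhds_iff.1 (mem_interior_iff_mem_nhds.1 hb)
  exact ⟨b, ε, hε, hball⟩

theorem ConvexOn.comp_sub_const (hf : ConvexOn ℝ univ f) (z : E) :
    ConvexOn ℝ univ fun x => f (x - z) := by
  simpa [Function.comp_def, neg_add_eq_sub] using hf.translate_right (-z)

variable {ι : Type*} [Fintype ι] {p : ι → E} {ε : ℝ}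

theorem ConvexOn.le_sum_abs_of_mem_ball (hf : ConvexOn ℝ univ f)
    (hp : ball 0 ε ⊆ convexHull ℝ (range p)) {a c : E} (ha : a ∈ ball c ε) :
    f a ≤ ∑ i, |f (c + p i)| := by
  have hac : a - c ∈ convexHull ℝ (range p) := hp (by rwa [mem_ball, dist_zero_right,
    ← dist_eq_norm])
  obtain ⟨_, ⟨i, rfl⟩, hi⟩ :=
    (hf.translate_right c).exists_ge_of_mem_convexHull (subset_univ _) hac
  calc f a = f (c + (a - c)) := by rw [add_sub_cancel]
    _ ≤ f (c + p i) := hi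
    _ ≤ |f (c + p i)| := le_abs_self _
    _ ≤ ∑ j, |f (c + p j)| :=
      Finset.single_le_sum (f := fun j => |f (c + p j)|) (fun j _ => abs_nonneg _)
        (Finset.mem_univ i)

theorem ConvexOn.abs_le_of_mem_ball (hf : ConvexOn ℝ univ f)
    (hp : ball 0 ε ⊆ convexHull ℝ (range p)) {a c : E} (ha : a ∈ ball c ε) :
    |f a| ≤ 2 * |f c| + ∑ i, |f (c + p i)| := by
  have hupper := hf.le_sum_abs_of_mem_ball hp ha
  have hreflect : (2 : ℝ) • c - a ∈ ball c ε := by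
    rwa [mem_ball, dist_eq_norm, show (2 : ℝ) • c - a - c = -(a - c) by module, norm_neg,
      ← dist_eq_norm]
  have hupper' := hf.le_sum_abs_of_mem_ball hp hreflect
  have hmid : f c ≤ (1 / 2) * f a + (1 / 2) * f ((2 : ℝ) • c - a) := by
    have := hf.2 (mem_univ a) (mem_univ ((2 : ℝ) • c - a)) (by norm_num) (by norm_num)
      (by norm_num : (1 / 2 : ℝ) + 1 / 2 = 1)
    rwa [show (1 / 2 : ℝ) • a + (1 / 2 : ℝ) • ((2 : ℝ) • c - a) = c by module] at this
  rw [abs_le]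
  constructor <;> linarith [neg_abs_le (f c), abs_nonneg (f c)]

theorem ConvexOn.lipschitzOnWith_ball_of_subset_convexHull (hf : ConvexOn ℝ univ f)
    (hε : 0 < ε) (hp : ball 0 ε ⊆ convexHull ℝ (range p)) (c : E) :
    LipschitzOnWith (Real.nnabs (4 / ε * (2 * |f c| + ∑ i, |f (c + p i)|))) f
      (ball c (ε / 2)) := by
  have h := (hf.subset (subset_univ _) (convex_ball c ε)).lipschitzOnWith_of_abs_le
    (half_pos hε) fun a ha => hf.abs_le_of_mem_ball hp (mem_ball.2 ha)
  rw [Real.nnabs_of_nonneg (by positivity)]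
  convert h using 2
  · field_simp; ring
  · ring

end LocalBounds

theorem ConvexOn.differentiable_integral_comp_sub {E : Type*} [NormedAddCommGroup E]
    [NormedSpace ℝ E] [FiniteDimensional ℝ E] [MeasurableSpace E] [BorelSpace E]
    {f : E → ℝ} (hf : ConvexOn ℝ univ f) {ν μ : Measure E} [ν.IsAddHaarMeasure] (hμ : μ ≪ ν)
    (hint : ∀ x, Integrable (fun z => f (x - z)) μ) :
    Differentiable ℝ fun x => ∫ z, f (x - z) ∂μ := by
  intro x₀
  obtain ⟨b, ε, hε, hb⟩ := exists_ball_subset_convexHull_affineBasis (E := E)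
  have hdiff : ∀ᵐ z ∂μ, HasFDerivAt (fun x => f (x - z)) (fderiv ℝ f (x₀ - z)) x₀ := by
    refine hμ.ae_le ((quasiMeasurePreserving_sub_left ν x₀).ae
      (hf.ae_differentiableAt (μ := ν)) |>.mono fun z hz => ?_)
    exact hz.hasFDerivAt.comp x₀ ((hasFDerivAt_id x₀).sub_const z)
  have hlip : ∀ z, LipschitzOnWith
      (Real.nnabs (4 / ε * (2 * |f (x₀ - z)| + ∑ i, |f (x₀ + b i - z)|)))
      (fun x => f (x - z)) (ball x₀ (ε / 2)) := fun z => by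
    simpa only [sub_add_eq_add_sub] using
      (hf.comp_sub_const z).lipschitzOnWith_ball_of_subset_convexHull hε hb x₀
  have hbound : Integrable
      (fun z => 4 / ε * (2 * |f (x₀ - z)| + ∑ i, |f (x₀ + b i - z)|)) μ :=
    (((hint x₀).abs.const_mul 2).add
      (integrable_finsetSum _ fun i _ => (hint (x₀ + b i)).abs)).const_mul _
  have hcont : Continuous f := hf.locallyLipschitz.continuous
  exact (hasFDerivAt_integral_of_dominated_loc_of_lip (ball_mem_nhds x₀ (half_pos hε))
    (.of_forall fun x => (hcont.comp (continuous_sub_left x)).aestronglyMeasurable) (hint x₀)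
    ((measurable_fderiv ℝ f).comp (continuous_sub_left x₀).measurable).aestronglyMeasurable
    (.of_forall hlip) hbound hdiff).2.differentiableAt

theorem stmt_12_general {n : ℕ} (f : EuclideanSpace ℝ (Fin n) → ℝ)
    (hf : ConvexOn ℝ Set.univ f)
    (μ : Measure (EuclideanSpace ℝ (Fin n)))
    (hac : μ ≪ volume)
    (hint : ∀ x, Integrable (fun z => f (x - z)) μ) :
    Differentiable ℝ (fun x => ∫ z, f (x - z) ∂μ) :=
  hf.differentiable_integral_comp_sub hac hint

theorem stmt_12 {n : ℕ} (f : EuclideanSpace ℝ (Fin n) → ℝ)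
    (hf : ConvexOn ℝ Set.univ f)
    (μ : Measure (EuclideanSpace ℝ (Fin n))) [IsProbabilityMeasure μ]
    (hac : μ ≪ volume)
    (hint : ∀ x, Integrable (fun z => f (x - z)) μ) :
    Differentiable ℝ (fun x => ∫ z, f (x - z) ∂μ) :=
  stmt_12_general f hf μ hac hint
end

section
/- Let $z$ be uniformly distributed on the cube $\prod_{i=1}^N C_{n_i}(0, \epsilon_i) \subset \mathbb{R}^n$ (where $C_{n_i}(0,\epsilon_i) = \{u \in \mathbb{R}^{n_i} : \|u\|_\infty \le \epsilon_i\}$ and $n = \sum_i n_i$), with density $p_c$. Then for all $x, y \in \mathbb{R}^n$, $\int_{\mathbb{R}^n} |p_c(u - x) - p_c(u - y)| \, du \le \frac{\sqrt{n}}{\min_{1 \le i \le N} \epsilon_i} \|x - y\|$, where $\|\cdot\|$ is the Euclidean norm. -/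
/-!
The shifted densities are `c = 1 / vol C` times the indicators of the boxes `A = x + C` and
`B = y + C`, so the integral equals `c · vol (A ∆ B) = 2 (1 - vol (A ∩ B) / vol C)`. The
intersection `A ∩ B` is a box with sides `max (2 ε_j - |x_j - y_j|) 0` (this covers the disjoint
case too), so the integral is `2 (1 - ∏ r_j)` with `r_j ∈ [0, 1]` and
`1 - r_j ≤ |x_j - y_j| / (2 ε_j)`. The Weierstrass product inequality `1 - ∏ r_j ≤ ∑ (1 - r_j)`,
`ε_j ≥ min ε` and Cauchy–Schwarz `∑ |t_j| ≤ √n ‖t‖` finish the proof.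
-/

open MeasureTheory Set

lemma one_sub_prod_le_sum_one_sub {ι : Type*} (s : Finset ι) {r : ι → ℝ}
    (h0 : ∀ j ∈ s, 0 ≤ r j) (h1 : ∀ j ∈ s, r j ≤ 1) :
    1 - ∏ j ∈ s, r j ≤ ∑ j ∈ s, (1 - r j) := by
  induction s using Finset.cons_induction with
  | empty => simp
  | cons a s ha ih =>
    simp only [Finset.forall_mem_cons] at h0 h1
    rw [Finset.prod_cons, Finset.sum_cons]
    have hP1 : ∏ j ∈ s, r j ≤ 1 := Finset.prod_le_one h0.2 h1.2
    have := mul_nonneg (sub_nonneg.2 h1.1) (sub_nonneg.2 hP1)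
    linarith [ih h0.2 h1.2]

lemma one_sub_prod_max_sub_div_le_sum {ι : Type*} (s : Finset ι) {a τ : ι → ℝ}
    (ha : ∀ j ∈ s, 0 < a j) (hτ : ∀ j ∈ s, 0 ≤ τ j) :
    1 - ∏ j ∈ s, max (a j - τ j) 0 / a j ≤ ∑ j ∈ s, τ j / a j := by
  refine (one_sub_prod_le_sum_one_sub s (fun j hj => by have := ha j hj; positivity)
    fun j hj => ?_).trans (Finset.sum_le_sum fun j hj => ?_)
  · rw [div_le_one (ha j hj), max_le_iff]
    exact ⟨by linarith [hτ j hj], (ha j hj).le⟩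
  · rw [sub_le_comm, one_sub_div (ha j hj).ne']
    gcongr
    · exact (ha j hj).le
    · exact le_max_left _ _

open scoped symmDiff in
lemma integral_abs_indicator_sub_indicator {α : Type*} [MeasurableSpace α] {μ : Measure α}
    {s t : Set α} (hs : MeasurableSet s) (ht : MeasurableSet t) (hμs : μ s ≠ ⊤) (hμt : μ t ≠ ⊤)
    (c : ℝ) :
    ∫ u, |s.indicator (fun _ => c) u - t.indicator (fun _ => c) u| ∂μ =
      |c| * (μ.real s + μ.real t - 2 * μ.real (s ∩ t)) := by
  simp_rw [← abs_indicator_symmDiff]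
  rw [comp_indicator_const c abs abs_zero, integral_indicator_const _ (hs.symmDiff ht),
    measureReal_symmDiff_eq hs ht hμs hμt, smul_eq_mul,
    ← measureReal_sdiff_add_inter ht hμs, ← measureReal_sdiff_add_inter hs hμt, inter_comm t]
  ring

variable {ι : Type*}

def closedBox (a : EuclideanSpace ℝ ι) (r : ι → ℝ) : Set (EuclideanSpace ℝ ι) :=
  {u | ∀ j, |u j - a j| ≤ r j}

lemma closedBox_eq_preimage (a : EuclideanSpace ℝ ι) (r : ι → ℝ) :
    closedBox a r = WithLp.ofLp ⁻¹' univ.pi fun j => Icc (a j - r j) (a j + r j) := by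
  ext u
  simp only [closedBox, mem_ofPred_eq, mem_preimage, mem_univ_pi, mem_Icc, abs_sub_le_iff]
  refine forall_congr' fun j => ?_
  constructor <;> rintro ⟨h₁, h₂⟩ <;> constructor <;> linarith

variable [Fintype ι]

lemma measurableSet_closedBox (a : EuclideanSpace ℝ ι) (r : ι → ℝ) :
    MeasurableSet (closedBox a r) := by
  rw [closedBox_eq_preimage]
  exact (PiLp.volume_preserving_ofLp ι).measurable (.univ_pi fun _ => measurableSet_Icc)

lemma volume_closedBox_inter_closedBox (a b : EuclideanSpace ℝ ι) (r : ι → ℝ) :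
    volume (closedBox a r ∩ closedBox b r) = ∏ j, ENNReal.ofReal (2 * r j - |a j - b j|) := by
  rw [closedBox_eq_preimage, closedBox_eq_preimage, ← preimage_inter, ← pi_inter_distrib,
    (PiLp.volume_preserving_ofLp ι).measure_preimage
      (MeasurableSet.univ_pi fun _ => measurableSet_Icc.inter measurableSet_Icc).nullMeasurableSet,
    volume_pi_pi]
  refine Finset.prod_congr rfl fun j _ => ?_
  rw [Icc_inter_Icc, Real.volume_Icc, min_add_add_right, max_sub_sub_right, ← max_sub_min_eq_abs']
  ring_nf

lemma volume_closedBox_ne_top (a : EuclideanSpace ℝ ι) (r : ι → ℝ) :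
    volume (closedBox a r) ≠ ⊤ := by
  rw [← inter_self (closedBox a r), volume_closedBox_inter_closedBox]
  exact ENNReal.prod_ne_top fun _ _ => ENNReal.ofReal_ne_top

lemma measureReal_closedBox_inter_closedBox (a b : EuclideanSpace ℝ ι) (r : ι → ℝ) :
    volume.real (closedBox a r ∩ closedBox b r) = ∏ j, max (2 * r j - |a j - b j|) 0 := by
  simp only [measureReal_def, volume_closedBox_inter_closedBox, ENNReal.toReal_prod,
    ENNReal.toReal_ofReal']

lemma measureReal_closedBox (a : EuclideanSpace ℝ ι) {r : ι → ℝ} (hr : ∀ j, 0 ≤ r j) :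
    volume.real (closedBox a r) = ∏ j, 2 * r j := by
  rw [← inter_self (closedBox a r), measureReal_closedBox_inter_closedBox]
  simp [hr]

lemma integral_abs_indicator_closedBox_sub (a b : EuclideanSpace ℝ ι) {r : ι → ℝ}
    (hr : ∀ j, 0 < r j) :
    ∫ u, |(closedBox a r).indicator (fun _ => (∏ j, 2 * r j)⁻¹) u -
        (closedBox b r).indicator (fun _ => (∏ j, 2 * r j)⁻¹) u| =
      2 * (1 - ∏ j, max (2 * r j - |a j - b j|) 0 / (2 * r j)) := by
  have hV : 0 < ∏ j, 2 * r j := Finset.prod_pos fun j _ => mul_pos two_pos (hr j)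
  rw [integral_abs_indicator_sub_indicator (measurableSet_closedBox _ _)
    (measurableSet_closedBox _ _) (volume_closedBox_ne_top _ _) (volume_closedBox_ne_top _ _),
    measureReal_closedBox _ fun j => (hr j).le, measureReal_closedBox _ fun j => (hr j).le,
    measureReal_closedBox_inter_closedBox, abs_inv, abs_of_pos hV, Finset.prod_div_distrib]
  field_simp
  ring

lemma EuclideanSpace.sum_abs_le_sqrt_card_mul_norm (x : EuclideanSpace ℝ ι) :
    ∑ j, |x j| ≤ √(Fintype.card ι) * ‖x‖ := by
  have := Real.sum_mul_le_sqrt_mul_sqrt Finset.univ (fun _ => 1) (|x ·|)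
  simp only [one_mul, one_pow, Finset.sum_const, Finset.card_univ, nsmul_one, sq_abs] at this
  simpa only [EuclideanSpace.norm_eq, Real.norm_eq_abs, sq_abs]

theorem stmt_13 {n N : ℕ} [NeZero N] (d : Fin n → Fin N) (ε : Fin N → ℝ)
    (hε : ∀ i, 0 < ε i)
    (p : EuclideanSpace ℝ (Fin n) → ℝ)
    (hp : ∀ z, p z = if ∀ j, |z j| ≤ ε (d j) then (∏ j, (2 * ε (d j)))⁻¹ else 0)
    (x y : EuclideanSpace ℝ (Fin n)) :
    ∫ u, |p (u - x) - p (u - y)| ≤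
      (Real.sqrt n / (Finset.univ.inf' Finset.univ_nonempty ε)) * ‖x - y‖ := by
  set m := Finset.univ.inf' Finset.univ_nonempty ε
  have hm : 0 < m := (Finset.lt_inf'_iff _).2 fun i _ => hε i
  have hp_shift : ∀ a u, p (u - a) =
      (closedBox a (ε ∘ d)).indicator (fun _ => (∏ j, 2 * (ε ∘ d) j)⁻¹) u := by
    classical
    intro a u
    rw [hp, indicator_apply]
    exact if_congr Iff.rfl rfl rfl
  simp_rw [hp_shift]
  rw [integral_abs_indicator_closedBox_sub (r := ε ∘ d) x y fun j => hε (d j)]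
  calc _ ≤ 2 * ∑ j, |x j - y j| / (2 * ε (d j)) := by
        gcongr
        exact one_sub_prod_max_sub_div_le_sum _ (fun j _ => mul_pos two_pos (hε (d j)))
          fun j _ => abs_nonneg _
    _ = ∑ j, |(x - y) j| / ε (d j) := by
        simp_rw [Finset.mul_sum, ← mul_div_assoc, mul_div_mul_left _ _ (two_ne_zero (α := ℝ)),
          PiLp.sub_apply]
    _ ≤ ∑ j, |(x - y) j| / m := Finset.sum_le_sum fun j _ =>
        div_le_div_of_nonneg_left (abs_nonneg _) hm (Finset.inf'_le _ (Finset.mem_univ _))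
    _ ≤ √n / m * ‖x - y‖ := by
        rw [← Finset.sum_div, div_mul_eq_mul_div]
        gcongr
        simpa using EuclideanSpace.sum_abs_le_sqrt_card_mul_norm (x - y)
end

section
/- Let $X \subseteq \mathbb{R}^n$ be closed and convex, $F$ continuous and strongly monotone with constant $\eta > 0$ on an enlargement of $X$, and for each $\epsilon > 0$ let $F^\epsilon(x) = E[F(x + z_\epsilon)]$ where the random vector $z_\epsilon$ has support of diameter tending to $0$ as $\epsilon \to 0$. Let $x^\epsilon$ and $x^*$ be the unique solutions of VI$(X, F^\epsilon)$ and VI$(X, F)$ respectively. Then $\eta \|x^* - x^\epsilon\| \le \|F^\epsilon(x^*) - F(x^*)\|$, and consequently $x^\epsilon \to x^*$ as $\epsilon \to 0$. -/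
open MeasureTheory Pointwise Filter

/-! Adding the two variational inequalities, at `x^ε` for `F^ε` and at `x*` for `F`, and using
strong monotonicity of `F^ε` (inherited from `F`, since it is an average of translates of `F`)
gives `η ‖x* - x^ε‖² ≤ ⟪x* - x^ε, F^ε x* - F x*⟫`, and Cauchy–Schwarz yields the bound.
Since the perturbations `z_ε` shrink to `0`, continuity of `F` at `x*` makes the right-hand side
tend to `0`. -/

open scoped RealInnerProductSpace Topology

section

variable {E : Type*} [NormedAddCommGroup E] [InnerProductSpace ℝ E]

theorem norm_sub_le_of_variationalInequality {F G : E → E} {η : ℝ} {x y : E}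
    (hG : η * ‖y - x‖ ^ 2 ≤ ⟪y - x, G y - G x⟫) (hGx : 0 ≤ ⟪y - x, G x⟫)
    (hFy : 0 ≤ ⟪x - y, F y⟫) :
    η * ‖y - x‖ ≤ ‖G y - F y‖ := by
  have hFy' : ⟪y - x, F y⟫ ≤ 0 := by
    rw [← neg_sub, inner_neg_left]
    linarith
  have hsq : η * ‖y - x‖ * ‖y - x‖ ≤ ‖G y - F y‖ * ‖y - x‖ :=
    calc η * ‖y - x‖ * ‖y - x‖ = η * ‖y - x‖ ^ 2 := by ring
      _ ≤ ⟪y - x, G y - G x⟫ := hG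
      _ ≤ ⟪y - x, G y - F y⟫ := by rw [inner_sub_right, inner_sub_right]; linarith
      _ ≤ ‖y - x‖ * ‖G y - F y‖ := real_inner_le_norm _ _
      _ = ‖G y - F y‖ * ‖y - x‖ := mul_comm _ _
  rcases (norm_nonneg (y - x)).eq_or_lt with h0 | hpos
  · rw [← h0, mul_zero]
    exact norm_nonneg _
  · exact le_of_mul_le_mul_right hsq hpos

variable [CompleteSpace E] {Ω : Type*} [MeasurableSpace Ω] {μ : Measure Ω}
  [IsProbabilityMeasure μ]

theorem strongMonotone_integral_comp_add {F : E → E} {S : Set E} {η : ℝ} {z : Ω → E} {x y : E}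
    (hF : ∀ u ∈ S, ∀ v ∈ S, η * ‖u - v‖ ^ 2 ≤ ⟪u - v, F u - F v⟫)
    (hxS : ∀ᵐ ω ∂μ, x + z ω ∈ S) (hyS : ∀ᵐ ω ∂μ, y + z ω ∈ S)
    (hx : Integrable (fun ω => F (x + z ω)) μ) (hy : Integrable (fun ω => F (y + z ω)) μ) :
    η * ‖x - y‖ ^ 2 ≤ ⟪x - y, (∫ ω, F (x + z ω) ∂μ) - ∫ ω, F (y + z ω) ∂μ⟫ := by
  have hxy : Integrable (fun ω => F (x + z ω) - F (y + z ω)) μ := hx.sub hy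
  rw [← integral_sub hx hy, ← integral_inner hxy]
  calc η * ‖x - y‖ ^ 2 = ∫ _ω, η * ‖x - y‖ ^ 2 ∂μ := by simp
    _ ≤ _ := by
      refine integral_mono_ae (integrable_const _) (hxy.const_inner _) ?_
      filter_upwards [hxS, hyS] with ω hxω hyω
      simpa only [add_sub_add_right_eq_sub] using hF _ hxω _ hyω

theorem tendsto_integral_comp_add_nhdsGT {F : E → E} {x : E} {z : ℝ → Ω → E}
    (hF : ContinuousAt F x) (hz : ∀ᶠ ε in 𝓝[>] 0, ∀ᵐ ω ∂μ, ‖z ε ω‖ ≤ ε)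
    (hint : ∀ᶠ ε in 𝓝[>] 0, Integrable (fun ω => F (x + z ε ω)) μ) :
    Tendsto (fun ε => ∫ ω, F (x + z ε ω) ∂μ) (𝓝[>] 0) (𝓝 (F x)) := by
  rw [Metric.tendsto_nhds]
  intro δ hδ
  obtain ⟨r, hr, hFr⟩ := Metric.continuousAt_iff.1 hF (δ / 2) (half_pos hδ)
  have hsmall : ∀ᶠ ε in 𝓝[>] (0 : ℝ), ε < r := nhdsWithin_le_nhds (gt_mem_nhds hr)
  filter_upwards [hz, hint, hsmall] with ε hzε hintε hεr
  have hclose : ∀ᵐ ω ∂μ, ‖F (x + z ε ω) - F x‖ ≤ δ / 2 := by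
    filter_upwards [hzε] with ω hω
    rw [← dist_eq_norm]
    exact (hFr (by simpa using hω.trans_lt hεr)).le
  calc dist (∫ ω, F (x + z ε ω) ∂μ) (F x) = ‖∫ ω, F (x + z ε ω) - F x ∂μ‖ := by
        rw [dist_eq_norm, integral_sub hintε (integrable_const _), integral_const]
        simp
    _ ≤ δ / 2 := by simpa using norm_integral_le_of_norm_le_const hclose
    _ < δ := half_lt_self hδ

end

theorem stmt_19_general {n : ℕ} {Ω : Type*} [MeasurableSpace Ω] (μ : Measure Ω)
    [IsProbabilityMeasure μ]
    (X : Set (EuclideanSpace ℝ (Fin n)))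
    (F : EuclideanSpace ℝ (Fin n) → EuclideanSpace ℝ (Fin n)) (η : ℝ) (hη : 0 < η)
    (hmono : ∀ u ∈ X + Metric.closedBall (0 : EuclideanSpace ℝ (Fin n)) 1,
       ∀ v ∈ X + Metric.closedBall (0 : EuclideanSpace ℝ (Fin n)) 1,
       η * ‖u - v‖^2 ≤ (inner ℝ (u - v) (F u - F v) : ℝ))
    (hcont : ContinuousOn F (X + Metric.closedBall (0 : EuclideanSpace ℝ (Fin n)) 1))
    (z : ℝ → Ω → EuclideanSpace ℝ (Fin n))
    (hz : ∀ ε ∈ Set.Ioc (0:ℝ) 1, ∀ᵐ ω ∂μ, ‖z ε ω‖ ≤ ε)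
    (hint : ∀ ε ∈ Set.Ioc (0:ℝ) 1, ∀ x ∈ X, Integrable (fun ω => F (x + z ε ω)) μ)
    (xe : ℝ → EuclideanSpace ℝ (Fin n))
    (hxe : ∀ ε ∈ Set.Ioc (0:ℝ) 1, xe ε ∈ X ∧
      ∀ y ∈ X, 0 ≤ (inner ℝ (y - xe ε) (∫ ω, F (xe ε + z ε ω) ∂μ) : ℝ))
    (xs : EuclideanSpace ℝ (Fin n)) (hxs : xs ∈ X)
    (hVI : ∀ y ∈ X, 0 ≤ (inner ℝ (y - xs) (F xs) : ℝ)) :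
    (∀ ε ∈ Set.Ioc (0:ℝ) 1,
       η * ‖xs - xe ε‖ ≤ ‖(∫ ω, F (xs + z ε ω) ∂μ) - F xs‖) ∧
    Tendsto xe (nhdsWithin 0 (Set.Ioi 0)) (nhds xs) := by
  have hball : ∀ x ∈ X, Metric.closedBall x 1 ⊆ X + Metric.closedBall 0 1 := fun x hx w hw =>
    ⟨x, hx, w - x, by simpa [dist_eq_norm] using hw, add_sub_cancel x w⟩
  have hshift : ∀ ε ∈ Set.Ioc (0:ℝ) 1, ∀ x ∈ X,
      ∀ᵐ ω ∂μ, x + z ε ω ∈ X + Metric.closedBall 0 1 := fun ε hε x hx => by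
    filter_upwards [hz ε hε] with ω hω
    exact hball x hx (by simpa [dist_eq_norm] using hω.trans hε.2)
  have hbound : ∀ ε ∈ Set.Ioc (0:ℝ) 1,
      η * ‖xs - xe ε‖ ≤ ‖(∫ ω, F (xs + z ε ω) ∂μ) - F xs‖ := fun ε hε => by
    obtain ⟨hxeX, hxeVI⟩ := hxe ε hε
    exact norm_sub_le_of_variationalInequality (G := fun x => ∫ ω, F (x + z ε ω) ∂μ)
      (strongMonotone_integral_comp_add hmono (hshift ε hε xs hxs) (hshift ε hε _ hxeX)
        (hint ε hε xs hxs) (hint ε hε _ hxeX))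
      (hxeVI xs hxs) (hVI _ hxeX)
  have hFxs : ContinuousAt F xs :=
    (hcont xs (hball xs hxs (Metric.mem_closedBall_self zero_le_one))).continuousAt
      (Filter.mem_of_superset (Metric.closedBall_mem_nhds xs one_pos) (hball xs hxs))
  have hsmooth := tendsto_integral_comp_add_nhdsGT hFxs
    (eventually_of_mem (Ioc_mem_nhdsGT zero_lt_one) hz)
    (eventually_of_mem (Ioc_mem_nhdsGT zero_lt_one) fun ε hε => hint ε hε xs hxs)
  refine ⟨hbound, tendsto_iff_norm_sub_tendsto_zero.2 ?_⟩
  refine squeeze_zero_norm' ?_ (by simpa using ((hsmooth.sub_const (F xs)).norm.const_mul η⁻¹))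
  filter_upwards [Ioc_mem_nhdsGT zero_lt_one] with ε hε
  rw [norm_norm, norm_sub_rev, le_inv_mul_iff₀ hη]
  exact hbound ε hε

theorem stmt_19 {n : ℕ} {Ω : Type*} [MeasurableSpace Ω] (μ : Measure Ω)
    [IsProbabilityMeasure μ]
    (X : Set (EuclideanSpace ℝ (Fin n))) (hX : IsClosed X) (hXc : Convex ℝ X)
    (F : EuclideanSpace ℝ (Fin n) → EuclideanSpace ℝ (Fin n)) (η : ℝ) (hη : 0 < η)
    (hmono : ∀ u ∈ X + Metric.closedBall (0 : EuclideanSpace ℝ (Fin n)) 1,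
       ∀ v ∈ X + Metric.closedBall (0 : EuclideanSpace ℝ (Fin n)) 1,
       η * ‖u - v‖^2 ≤ (inner ℝ (u - v) (F u - F v) : ℝ))
    (hcont : ContinuousOn F (X + Metric.closedBall (0 : EuclideanSpace ℝ (Fin n)) 1))
    (z : ℝ → Ω → EuclideanSpace ℝ (Fin n))
    (hz : ∀ ε ∈ Set.Ioc (0:ℝ) 1, ∀ᵐ ω ∂μ, ‖z ε ω‖ ≤ ε)
    (hint : ∀ ε ∈ Set.Ioc (0:ℝ) 1, ∀ x ∈ X, Integrable (fun ω => F (x + z ε ω)) μ)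
    (xe : ℝ → EuclideanSpace ℝ (Fin n))
    (hxe : ∀ ε ∈ Set.Ioc (0:ℝ) 1, xe ε ∈ X ∧
      ∀ y ∈ X, 0 ≤ (inner ℝ (y - xe ε) (∫ ω, F (xe ε + z ε ω) ∂μ) : ℝ))
    (xs : EuclideanSpace ℝ (Fin n)) (hxs : xs ∈ X)
    (hVI : ∀ y ∈ X, 0 ≤ (inner ℝ (y - xs) (F xs) : ℝ)) :
    (∀ ε ∈ Set.Ioc (0:ℝ) 1,
       η * ‖xs - xe ε‖ ≤ ‖(∫ ω, F (xs + z ε ω) ∂μ) - F xs‖) ∧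
    Tendsto xe (nhdsWithin 0 (Set.Ioi 0)) (nhds xs) :=
  stmt_19_general μ X F η hη hmono hcont z hz hint xe hxe xs hxs hVI
end
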